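/- Let K be a field, k ≥ 1, let φ be a system of formal power series with φ₀ = 0 and invertible linear part φ₁, and let u be a system that is homogeneous of degree k+1. Then for every m ≥ 1, the degree-(k+1) homogeneous component of the m-fold composition of φ + u satisfies ((φ+u)^m)_{k+1} = (φ^m)_{k+1} + Σ_{i=0}^{m−1} φ₁^i∘u∘φ₁^{m−1−i}, where φ₁^i denotes the i-fold composition of the linear system φ₁ (with φ₁^0 = id) and ∘ denotes composition of systems. -/

import Mathlib

noncomputable section

open MvPowerSeries

/-- A system of `n` formal power series in the `n` variables `x₁, …, xₙ` over `K`. -/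
abbrev Sys (n : ℕ) (K : Type) [Field K] := Fin n → MvPowerSeries (Fin n) K

variable {n : ℕ} {K : Type} [Field K]

/-- The degree-`k` homogeneous component `φ_k` of a system `φ`. -/
def homC (k : ℕ) (φ : Sys n K) : Sys n K :=
  fun i => (fun e => if (e.sum fun _ x => x) = k then MvPowerSeries.coeff e (φ i) else 0 :
    MvPowerSeries (Fin n) K)

/-- The truncation `φ_{≤ m}` of a system `φ` to total degrees `≤ m`. -/
def truncLE (m : ℕ) (φ : Sys n K) : Sys n K :=
  fun i => (fun e => if (e.sum fun _ x => x) ≤ m then MvPowerSeries.coeff e (φ i) else 0 :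
    MvPowerSeries (Fin n) K)

/-- Composition (substitution) `φ ∘ ψ` of systems of formal power series.  The coefficient of a
monomial `e` in `φ ∘ ψ` is computed by substituting `ψ` into a sufficiently large polynomial
truncation of `φ`; this agrees with the usual substitution whenever `ψ` has zero constant term. -/
def comp (φ ψ : Sys n K) : Sys n K :=
  fun i => (fun e =>
    MvPowerSeries.coeff e
      (MvPolynomial.eval₂ (MvPowerSeries.C (σ := Fin n) (R := K)) ψ
        (MvPowerSeries.trunc K
          (Finsupp.equivFunOnFinite.symm fun _ => (e.sum fun _ x => x) + 1) (φ i))) :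
    MvPowerSeries (Fin n) K)

/-- The identity system `id = (x₁, …, xₙ)`. -/
def idSys : Sys n K := fun i => MvPowerSeries.X i

/-- The `m`-fold composition `φ^m` of a system with itself (`φ^0 = id`). -/
def iterComp (φ : Sys n K) : ℕ → Sys n K
  | 0 => idSys
  | m + 1 => comp (iterComp φ m) φ

/-- The Jacobian matrix of a system, i.e. its linear part viewed as a matrix. -/
def jac (φ : Sys n K) : Matrix (Fin n) (Fin n) K :=
  fun i j => MvPowerSeries.coeff (Finsupp.single j 1) (φ i)

/-- The linear system of power series attached to a matrix `A`. -/
def ofMatrix (A : Matrix (Fin n) (Fin n) K) : Sys n K :=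
  fun i => ∑ j, MvPowerSeries.C (σ := Fin n) (R := K) (A i j) * MvPowerSeries.X j

/-!
Write `F = φ + u` and `L = φ₁`. For inner systems without constant terms `comp` agrees with
`MvPowerSeries.subst`, so it is associative and additive in the outer system. By induction,
`F^m ≡ φ^m + S_m` modulo order `k + 2`, where `S_m = Σ_{i<m} L^i ∘ u ∘ L^(m-1-i)` is
homogeneous of degree `k + 1`. In the step `F^(m+1) = F^m ∘ F`: as `u` has order `k + 1 ≥ 2`,
modulo order `k + 2` only the linear part of `φ^m` sees the inner perturbation `u`, so
`φ^m ∘ F ≡ φ^(m+1) + L^m ∘ u`; as `F - L` has order `≥ 2`, `S_m ∘ F ≡ S_m ∘ L`.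
Hence `S_(m+1) = S_m ∘ L + L^m ∘ u`, and the degree-`(k + 1)` part of `φ^m + S_m` is
`(φ^m)_(k+1) + S_m`.
-/

namespace MvPowerSeries

variable {σ τ R : Type*} [CommRing R]

section Order

theorem le_order_mul_sub_mul {x x' y y' : MvPowerSeries τ R} {p q c : ℕ∞}
    (hx' : p ≤ x'.order) (hy : q ≤ y.order) (hxx' : p + c ≤ (x - x').order)
    (hyy' : q + c ≤ (y - y').order) : p + q + c ≤ (x * y - x' * y').order := by
  rw [show x * y - x' * y' = (x - x') * y + x' * (y - y') by ring]
  refine le_trans (le_min ?_ ?_) min_order_le_add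
  · calc p + q + c = (p + c) + q := by rw [add_right_comm]
      _ ≤ _ := (add_le_add hxx' hy).trans le_order_mul
  · calc p + q + c = p + (q + c) := by rw [add_assoc]
      _ ≤ _ := (add_le_add hx' hyy').trans le_order_mul

theorem le_order_pow_sub_pow {x x' : MvPowerSeries τ R} {p c : ℕ∞}
    (hx : p ≤ x.order) (hx' : p ≤ x'.order) (hxx' : p + c ≤ (x - x').order) (m : ℕ) :
    m • p + c ≤ (x ^ m - x' ^ m).order := by
  induction m with
  | zero => simp
  | succ m ih =>
    rw [pow_succ, pow_succ, succ_nsmul]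
    exact le_order_mul_sub_mul ((nsmul_le_nsmul_right hx' m).trans (le_order_pow m)) hx ih hxx'

theorem le_order_prod_pow_sub_prod_pow {a b : σ → MvPowerSeries τ R} {c : ℕ∞}
    (ha : ∀ j, 1 ≤ (a j).order) (hb : ∀ j, 1 ≤ (b j).order)
    (hab : ∀ j, 1 + c ≤ (a j - b j).order) (d : σ →₀ ℕ) :
    d.degree + c ≤ (d.prod (fun j m ↦ a j ^ m) - d.prod (fun j m ↦ b j ^ m)).order := by
  classical
  rw [Finsupp.prod, Finsupp.prod, Finsupp.degree_apply]
  induction d.support using Finset.induction_on with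
  | empty => simp
  | insert j s hj ih =>
    rw [Finset.prod_insert hj, Finset.prod_insert hj, Finset.sum_insert hj, Nat.cast_add]
    have hpow := le_order_pow_sub_pow (ha j) (hb j) (hab j) (d j)
    rw [nsmul_one] at hpow
    refine le_order_mul_sub_mul ?_ ?_ hpow ih
    · simpa using (nsmul_le_nsmul_right (hb j) (d j)).trans (le_order_pow _)
    · push_cast
      refine (Finset.sum_le_sum fun i _ ↦ ?_).trans (le_order_prod _ _)
      simpa using (nsmul_le_nsmul_right (ha i) (d i)).trans (le_order_pow _)

end Order

section Homogeneous

variable {f g : MvPowerSeries σ R} {p q : ℕ}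

theorem IsHomogeneous.of_coeff_eq_zero
    (h : ∀ d : σ →₀ ℕ, d.degree ≠ p → coeff d f = 0) :
    f.IsHomogeneous p := fun {d} hd ↦ by
  simpa [Finsupp.degree_eq_weight_one, Pi.one_def] using not_imp_comm.mp (h d) hd

theorem isHomogeneous_one : (1 : MvPowerSeries σ R).IsHomogeneous 0 := by
  classical
  apply IsHomogeneous.of_coeff_eq_zero
  intro d hd
  rw [coeff_one, if_neg (by rintro rfl; simp at hd)]

theorem isHomogeneous_X (j : σ) : (X j : MvPowerSeries σ R).IsHomogeneous 1 := by
  classical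
  apply IsHomogeneous.of_coeff_eq_zero
  intro d hd
  rw [coeff_X, if_neg (by rintro rfl; simp at hd)]

theorem IsHomogeneous.pow (hf : f.IsHomogeneous p) (m : ℕ) : (f ^ m).IsHomogeneous (m * p) := by
  induction m with
  | zero => rw [pow_zero, zero_mul]; exact isHomogeneous_one
  | succ m ih => rw [pow_succ, add_one_mul]; exact ih.mul hf

theorem IsHomogeneous.prod_pow {a : σ → MvPowerSeries τ R} (ha : ∀ j, (a j).IsHomogeneous q)
    (d : σ →₀ ℕ) : (d.prod fun j m ↦ a j ^ m).IsHomogeneous (d.degree * q) := by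
  classical
  rw [Finsupp.prod, Finsupp.degree_apply, Finset.sum_mul]
  induction d.support using Finset.induction_on with
  | empty => rw [Finset.prod_empty, Finset.sum_empty]; exact isHomogeneous_one
  | insert j s hj ih =>
    rw [Finset.prod_insert hj, Finset.sum_insert hj]
    exact IsHomogeneous.mul (IsHomogeneous.pow (ha j) _) ih

theorem IsHomogeneous.constantCoeff_eq_zero (hf : f.IsHomogeneous p) (hp : p ≠ 0) :
    f.constantCoeff = 0 := by
  rw [← coeff_zero_eq_constantCoeff_apply]
  exact hf.coeff_eq_zero (by simpa using hp.symm)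

theorem IsHomogeneous.le_order (hf : f.IsHomogeneous p) : (p : ℕ∞) ≤ f.order :=
  MvPowerSeries.le_order fun d hd ↦ hf.coeff_eq_zero (by exact_mod_cast hd.ne)

theorem homogeneousComponent_add_of_lt_order (hg : g.IsHomogeneous p) (hf : p < f.order) :
    homogeneousComponent p (g + f) = g := by
  rw [map_add, homogeneousComponent_of_lt_order_eq_zero hf, add_zero,
    ← isHomogeneous_iff_eq_homogeneousComponent.mp hg]

theorem le_order_sub_homogeneousComponent (hf : p ≤ f.order) :
    p + 1 ≤ (f - homogeneousComponent p f).order := by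
  refine le_order fun d hd ↦ ?_
  rw [map_sub, coeff_homogeneousComponent]
  split_ifs with h
  · exact sub_self _
  · rw [sub_zero]
    refine coeff_of_lt_order (lt_of_lt_of_le ?_ hf)
    have : d.degree < p + 1 := by exact_mod_cast hd
    exact_mod_cast (by omega : d.degree < p)

end Homogeneous

section Subst

variable [Finite σ] {a b : σ → MvPowerSeries τ R} {f : MvPowerSeries σ R} {p q : ℕ}

theorem order_le_order_subst (ha : ∀ j, (a j).constantCoeff = 0) (f : MvPowerSeries σ R) :
    f.order ≤ (subst a f).order := by
  refine le_trans ?_ (le_order_subst (hasSubst_of_constantCoeff_zero ha) f)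
  refine le_mul_of_one_le_left zero_le (le_iInf fun j ↦ ?_)
  exact one_le_order_iff_constCoeff_eq_zero.mpr (ha j)

theorem le_order_subst_sub_subst (ha : ∀ j, (a j).constantCoeff = 0)
    (hb : ∀ j, (b j).constantCoeff = 0) {c : ℕ∞} (hab : ∀ j, 1 + c ≤ (a j - b j).order)
    (f : MvPowerSeries σ R) : f.order + c ≤ (subst a f - subst b f).order := by
  refine le_order fun e he ↦ ?_
  rw [map_sub, coeff_subst (hasSubst_of_constantCoeff_zero ha),
    coeff_subst (hasSubst_of_constantCoeff_zero hb),
    ← finsum_sub_distrib (coeff_subst_finite (hasSubst_of_constantCoeff_zero ha) f e)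
      (coeff_subst_finite (hasSubst_of_constantCoeff_zero hb) f e)]
  refine finsum_eq_zero_of_forall_eq_zero fun d ↦ ?_
  rw [← smul_sub, ← map_sub]
  by_cases hd : coeff d f = 0
  · rw [hd, zero_smul]
  refine smul_eq_zero_of_right _ (coeff_of_lt_order (he.trans_le ?_))
  have hprod := le_order_prod_pow_sub_prod_pow
    (fun j ↦ one_le_order_iff_constCoeff_eq_zero.mpr (ha j))
    (fun j ↦ one_le_order_iff_constCoeff_eq_zero.mpr (hb j)) hab d
  exact (add_le_add_left (order_le hd) c).trans hprod

theorem IsHomogeneous.subst (hf : f.IsHomogeneous p) (ha : ∀ j, (a j).IsHomogeneous q)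
    (hq : q ≠ 0) : (subst a f).IsHomogeneous (p * q) := by
  apply IsHomogeneous.of_coeff_eq_zero
  intro e he
  rw [coeff_subst (hasSubst_of_constantCoeff_zero fun j ↦
    IsHomogeneous.constantCoeff_eq_zero (ha j) hq)]
  refine finsum_eq_zero_of_forall_eq_zero fun d ↦ ?_
  by_cases hd : d.degree = p
  · rw [IsHomogeneous.coeff_eq_zero (IsHomogeneous.prod_pow ha d) (by rwa [hd]), smul_zero]
  · rw [hf.coeff_eq_zero hd, zero_smul]

theorem homogeneousComponent_one_subst (hb : ∀ j, (b j).constantCoeff = 0)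
    (hf : f.constantCoeff = 0) :
    homogeneousComponent 1 (subst b f) =
      subst (fun j ↦ homogeneousComponent 1 (b j)) (homogeneousComponent 1 f) := by
  set b₁ := fun j ↦ homogeneousComponent 1 (b j)
  set f₁ := homogeneousComponent 1 f
  have hb₁ : ∀ j, (b₁ j).IsHomogeneous 1 := fun j ↦ isHomogeneous_homogeneousComponent _ 1
  have hb₁0 : ∀ j, (b₁ j).constantCoeff = 0 := fun j ↦
    IsHomogeneous.constantCoeff_eq_zero (hb₁ j) one_ne_zero
  have hf₁ : f₁.IsHomogeneous 1 := isHomogeneous_homogeneousComponent f 1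
  have hlin : (subst b₁ f₁).IsHomogeneous 1 := by
    rw [← mul_one 1]
    exact hf₁.subst hb₁ one_ne_zero
  have hbb₁ : ∀ j, 1 + 1 ≤ (b j - b₁ j).order := fun j ↦
    le_order_sub_homogeneousComponent (one_le_order_iff_constCoeff_eq_zero.mpr (hb j))
  rw [show subst b f = subst b₁ f₁ + (subst b (f - f₁) + (subst b f₁ - subst b₁ f₁)) by
    rw [subst_sub (hasSubst_of_constantCoeff_zero hb)]; ring]
  refine homogeneousComponent_add_of_lt_order hlin
    (lt_of_lt_of_le (by norm_num : (1 : ℕ∞) < 1 + 1) (le_trans (le_min ?_ ?_) min_order_le_add))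
  · exact (le_order_sub_homogeneousComponent (one_le_order_iff_constCoeff_eq_zero.mpr hf)).trans
      (order_le_order_subst hb _)
  · exact (add_le_add hf₁.le_order le_rfl).trans (le_order_subst_sub_subst hb hb₁0 hbb₁ f₁)

end Subst

section Linear

variable [Fintype σ] {a b : σ → MvPowerSeries τ R} {f : MvPowerSeries σ R}

theorem IsHomogeneous.eq_sum_monomial (hf : f.IsHomogeneous 1) :
    f = ∑ j, monomial (Finsupp.single j 1) (coeff (Finsupp.single j 1) f) := by
  classical
  ext e
  rw [map_sum]
  simp_rw [coeff_monomial]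
  by_cases he : e.degree = 1
  · obtain ⟨j, rfl⟩ := (Finsupp.sum_eq_one_iff _).mp he
    rw [Finset.sum_eq_single j (fun i _ hij ↦ if_neg fun h ↦ hij ?_) (by simp), if_pos rfl]
    exact (Finsupp.single_left_injective one_ne_zero h).symm
  · rw [hf.coeff_eq_zero he, Finset.sum_eq_zero fun j _ ↦ if_neg ?_]
    rintro rfl
    simp at he

theorem IsHomogeneous.subst_eq_sum (hf : f.IsHomogeneous 1)
    (ha : ∀ j, (a j).constantCoeff = 0) :
    MvPowerSeries.subst a f = ∑ j, coeff (Finsupp.single j 1) f • a j := by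
  conv_lhs => rw [hf.eq_sum_monomial, ← coe_substAlgHom (hasSubst_of_constantCoeff_zero ha),
    map_sum]
  simp [subst_monomial (hasSubst_of_constantCoeff_zero ha), Algebra.smul_def]

theorem IsHomogeneous.subst_add (hf : f.IsHomogeneous 1) (ha : ∀ j, (a j).constantCoeff = 0)
    (hb : ∀ j, (b j).constantCoeff = 0) :
    MvPowerSeries.subst (a + b) f = MvPowerSeries.subst a f + MvPowerSeries.subst b f := by
  rw [hf.subst_eq_sum fun j ↦ by simp [ha j, hb j], hf.subst_eq_sum ha, hf.subst_eq_sum hb,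
    ← Finset.sum_add_distrib]
  simp only [Pi.add_apply, smul_add]

theorem le_order_subst_add_sub {v : σ → MvPowerSeries τ R} {c : ℕ∞}
    (ha : ∀ j, (a j).constantCoeff = 0) (hv : ∀ j, 1 + c ≤ (v j).order)
    (hf : f.constantCoeff = 0) :
    2 + c ≤ (subst (a + v) f - subst a f - subst v (homogeneousComponent 1 f)).order := by
  have hv0 : ∀ j, (v j).constantCoeff = 0 := fun j ↦
    one_le_order_iff_constCoeff_eq_zero.mp (le_trans le_self_add (hv j))
  have hav0 : ∀ j, ((a + v) j).constantCoeff = 0 := fun j ↦ by simp [ha j, hv0 j]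
  set f₁ := homogeneousComponent 1 f
  have hsplit : subst (a + v) f - subst a f - subst v f₁ =
      subst (a + v) (f - f₁) - subst a (f - f₁) := by
    rw [subst_sub (hasSubst_of_constantCoeff_zero hav0),
      subst_sub (hasSubst_of_constantCoeff_zero ha),
      IsHomogeneous.subst_add (isHomogeneous_homogeneousComponent f 1) ha hv0]
    ring
  rw [hsplit]
  refine le_trans ?_ (le_order_subst_sub_subst hav0 ha (fun j ↦ by simpa using hv j) (f - f₁))
  exact add_le_add (le_order_sub_homogeneousComponent
    (one_le_order_iff_constCoeff_eq_zero.mpr hf)) le_rfl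

end Linear

end MvPowerSeries

theorem homC_apply (k : ℕ) (φ : Sys n K) (i : Fin n) :
    homC k φ i = homogeneousComponent k (φ i) := by
  ext e
  rw [coeff_homogeneousComponent]
  rfl

theorem comp_apply_eq_subst {ψ : Sys n K} (hψ : ∀ j, (ψ j).constantCoeff = 0) (φ : Sys n K)
    (i : Fin n) : comp φ ψ i = subst ψ (φ i) := by
  funext e
  set N : Fin n →₀ ℕ := Finsupp.equivFunOnFinite.symm fun _ ↦ (e.sum fun _ x ↦ x) + 1
  show coeff e (MvPolynomial.eval₂ C ψ (trunc K N (φ i))) = coeff e (subst ψ (φ i))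
  -- the tail of `φ i` discarded by the truncation has order `> deg e`
  have htrunc :
      (e.degree : ℕ∞) < (φ i - trunc K N (φ i) : MvPowerSeries (Fin n) K).order := by
    refine lt_of_lt_of_le (ENat.natCast_lt_natCast.mpr e.degree.lt_succ_self)
      (MvPowerSeries.le_order fun d hd ↦ ?_)
    have hd : d.degree < e.degree + 1 := by exact_mod_cast hd
    have hdN : d < N := Pi.lt_def.mpr ⟨fun j ↦ (Finsupp.le_degree j d).trans hd.le,
      i, (Finsupp.le_degree i d).trans_lt hd⟩
    rw [map_sub, MvPolynomial.coeff_coe, coeff_trunc, if_pos hdN, sub_self]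
  have hsub := coeff_of_lt_order (htrunc.trans_le (order_le_order_subst hψ _))
  rw [subst_sub (hasSubst_of_constantCoeff_zero hψ), map_sub, sub_eq_zero, subst_coe,
    MvPolynomial.aeval_def, ← c_eq_algebraMap] at hsub
  exact hsub.symm

section Systems

variable {φ ψ χ : Sys n K}

theorem constantCoeff_comp (hφ : ∀ i, (φ i).constantCoeff = 0)
    (hψ : ∀ j, (ψ j).constantCoeff = 0) (i : Fin n) : (comp φ ψ i).constantCoeff = 0 := by
  rw [comp_apply_eq_subst hψ]
  exact constantCoeff_subst_eq_zero (hasSubst_of_constantCoeff_zero hψ) hψ (hφ i)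

theorem constantCoeff_iterComp (hφ : ∀ i, (φ i).constantCoeff = 0) (m : ℕ) (i : Fin n) :
    (iterComp φ m i).constantCoeff = 0 := by
  induction m generalizing i with
  | zero => exact constantCoeff_X i
  | succ m ih => exact constantCoeff_comp ih hφ i

theorem comp_assoc (hψ : ∀ j, (ψ j).constantCoeff = 0) (hχ : ∀ j, (χ j).constantCoeff = 0) :
    comp (comp φ ψ) χ = comp φ (comp ψ χ) := by
  have hψχ : comp ψ χ = fun j ↦ subst χ (ψ j) := funext (comp_apply_eq_subst hχ ψ)
  funext i
  rw [comp_apply_eq_subst hχ, comp_apply_eq_subst hψ,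
    comp_apply_eq_subst (constantCoeff_comp hψ hχ), subst_comp_subst_apply
      (hasSubst_of_constantCoeff_zero hψ) (hasSubst_of_constantCoeff_zero hχ), hψχ]

theorem comp_idSys (φ : Sys n K) : comp φ idSys = φ := by
  funext i
  rw [comp_apply_eq_subst (ψ := idSys) constantCoeff_X]
  exact congrFun subst_self (φ i)

theorem sum_comp {ι : Type*} (s : Finset ι) (φ : ι → Sys n K)
    (hψ : ∀ j, (ψ j).constantCoeff = 0) :
    comp (∑ x ∈ s, φ x) ψ = ∑ x ∈ s, comp (φ x) ψ := by
  funext i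
  simp only [Finset.sum_apply, comp_apply_eq_subst hψ,
    ← coe_substAlgHom (hasSubst_of_constantCoeff_zero hψ), map_sum]

theorem isHomogeneous_comp {p q : ℕ} (hφ : ∀ i, (φ i).IsHomogeneous p)
    (hψ : ∀ j, (ψ j).IsHomogeneous q) (hq : q ≠ 0) (i : Fin n) :
    (comp φ ψ i).IsHomogeneous (p * q) := by
  rw [comp_apply_eq_subst fun j ↦ IsHomogeneous.constantCoeff_eq_zero (hψ j) hq]
  exact IsHomogeneous.subst (hφ i) hψ hq

theorem isHomogeneous_iterComp (hφ : ∀ i, (φ i).IsHomogeneous 1) (m : ℕ) (i : Fin n) :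
    (iterComp φ m i).IsHomogeneous 1 := by
  induction m generalizing i with
  | zero => exact isHomogeneous_X i
  | succ m ih =>
    rw [← mul_one 1]
    exact isHomogeneous_comp ih hφ one_ne_zero i

theorem isHomogeneous_homC (k : ℕ) (φ : Sys n K) (i : Fin n) :
    (homC k φ i).IsHomogeneous k := by
  rw [homC_apply]
  exact isHomogeneous_homogeneousComponent _ k

theorem constantCoeff_homC_one (φ : Sys n K) (i : Fin n) : (homC 1 φ i).constantCoeff = 0 :=
  IsHomogeneous.constantCoeff_eq_zero (isHomogeneous_homC 1 φ i) one_ne_zero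

theorem homC_one_comp (hφ : ∀ i, (φ i).constantCoeff = 0)
    (hψ : ∀ j, (ψ j).constantCoeff = 0) :
    homC 1 (comp φ ψ) = comp (homC 1 φ) (homC 1 ψ) := by
  funext i
  rw [homC_apply, comp_apply_eq_subst hψ, comp_apply_eq_subst (constantCoeff_homC_one ψ),
    homC_apply, homogeneousComponent_one_subst hψ (hφ i), funext (homC_apply 1 ψ)]

theorem homC_one_iterComp (hφ : ∀ i, (φ i).constantCoeff = 0) (m : ℕ) :
    homC 1 (iterComp φ m) = iterComp (homC 1 φ) m := by
  induction m with
  | zero =>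
    funext i
    rw [homC_apply, iterComp, idSys,
      ← isHomogeneous_iff_eq_homogeneousComponent.mp (isHomogeneous_X i)]
    rfl
  | succ m ih => rw [iterComp, homC_one_comp (constantCoeff_iterComp hφ m) hφ, ih, iterComp]

end Systems

def perturbationSum (L u : Sys n K) (m : ℕ) : Sys n K :=
  ∑ i ∈ Finset.range m, comp (iterComp L i) (comp u (iterComp L (m - 1 - i)))

theorem perturbationSum_zero (L u : Sys n K) : perturbationSum L u 0 = 0 :=
  Finset.sum_range_zero _

theorem perturbationSum_succ {L u : Sys n K} (hL : ∀ j, (L j).constantCoeff = 0)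
    (hu : ∀ j, (u j).constantCoeff = 0) (m : ℕ) :
    perturbationSum L u (m + 1) = comp (perturbationSum L u m) L + comp (iterComp L m) u := by
  rw [perturbationSum, perturbationSum, Finset.sum_range_succ, Nat.add_sub_cancel, Nat.sub_self,
    iterComp, comp_idSys, sum_comp _ _ hL]
  refine congrArg (· + _) (Finset.sum_congr rfl fun x hx ↦ ?_)
  have hu' : ∀ j, (comp u (iterComp L (m - 1 - x)) j).constantCoeff = 0 :=
    constantCoeff_comp hu (constantCoeff_iterComp hL _)
  rw [comp_assoc hu' hL, comp_assoc (constantCoeff_iterComp hL _) hL,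
    show m - x = m - 1 - x + 1 by have := Finset.mem_range.mp hx; omega, iterComp]

theorem isHomogeneous_perturbationSum {L u : Sys n K} {p : ℕ} (hL : ∀ j, (L j).IsHomogeneous 1)
    (hu : ∀ j, (u j).IsHomogeneous p) (hp : p ≠ 0) (m : ℕ) (i : Fin n) :
    (perturbationSum L u m i).IsHomogeneous p := by
  rw [isHomogeneous_iff_eq_homogeneousComponent, perturbationSum, Finset.sum_apply, map_sum]
  refine Finset.sum_congr rfl fun x _ ↦ ?_
  rw [← isHomogeneous_iff_eq_homogeneousComponent, ← one_mul p]
  refine isHomogeneous_comp (isHomogeneous_iterComp hL x) (fun j ↦ ?_) hp i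
  rw [← mul_one p]
  exact isHomogeneous_comp hu (isHomogeneous_iterComp hL _) one_ne_zero j

section Perturbation

variable {k : ℕ} {φ u : Sys n K}

theorem homC_one_add_of_isHomogeneous (hu : ∀ j, (u j).IsHomogeneous k) (hk : 1 < k) :
    homC 1 (φ + u) = homC 1 φ := by
  funext j
  have hlt : ((1 : ℕ) : ℕ∞) < (u j).order :=
    (ENat.natCast_lt_natCast.mpr hk).trans_le (IsHomogeneous.le_order (hu j))
  rw [homC_apply, homC_apply, Pi.add_apply, map_add, homogeneousComponent_of_lt_order_eq_zero hlt,
    add_zero]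

theorem le_order_add_sub_homC_one (hφ : ∀ j, (φ j).constantCoeff = 0)
    (hu : ∀ j, 1 + 1 ≤ (u j).order) (j : Fin n) :
    1 + 1 ≤ ((φ + u) j - homC 1 φ j).order := by
  rw [Pi.add_apply, homC_apply, add_sub_right_comm]
  refine le_trans (le_min ?_ (hu j)) min_order_le_add
  exact le_order_sub_homogeneousComponent (one_le_order_iff_constCoeff_eq_zero.mpr (hφ j))

theorem le_order_iterComp_add_sub_perturbationSum (hk : 1 ≤ k)
    (hφ : ∀ j, (φ j).constantCoeff = 0) (hu : ∀ j, (u j).IsHomogeneous (k + 1)) (m : ℕ)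
    (i : Fin n) :
    ((k + 2 : ℕ) : ℕ∞) ≤
      (iterComp (φ + u) m i - iterComp φ m i - perturbationSum (homC 1 φ) u m i).order := by
  have hu0 : ∀ j, (u j).constantCoeff = 0 := fun j ↦
    IsHomogeneous.constantCoeff_eq_zero (hu j) k.succ_ne_zero
  have hF0 : ∀ j, ((φ + u) j).constantCoeff = 0 := fun j ↦ by simp [hφ j, hu0 j]
  have hu_order : ∀ j, 1 + (k : ℕ∞) ≤ (u j).order := fun j ↦ by
    simpa [add_comm] using IsHomogeneous.le_order (hu j)
  have hFL := le_order_add_sub_homC_one hφ fun j ↦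
    (add_le_add le_rfl (by exact_mod_cast hk)).trans (hu_order j)
  induction m generalizing i with
  | zero => simp [iterComp, perturbationSum_zero]
  | succ m ih =>
    set A := iterComp (φ + u) m i
    set B := iterComp φ m i
    set S := perturbationSum (homC 1 φ) u m i
    have hA₁ : homogeneousComponent 1 A = iterComp (homC 1 φ) m i := by
      rw [← homC_apply, homC_one_iterComp hF0, homC_one_add_of_isHomogeneous hu (by omega)]
    have hB₁ : homogeneousComponent 1 B = iterComp (homC 1 φ) m i := by
      rw [← homC_apply, homC_one_iterComp hφ]
    have hS : ((k + 1 : ℕ) : ℕ∞) ≤ S.order := IsHomogeneous.le_order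
      (isHomogeneous_perturbationSum (isHomogeneous_homC 1 φ) hu k.succ_ne_zero m i)
    have hsplit : subst (φ + u) A - subst φ B -
        (subst (homC 1 φ) S + subst u (homogeneousComponent 1 A)) =
        subst (φ + u) (A - B - S) +
          (subst (φ + u) B - subst φ B - subst u (homogeneousComponent 1 B)) +
          (subst (φ + u) S - subst (homC 1 φ) S) := by
      rw [subst_sub (hasSubst_of_constantCoeff_zero hF0),
        subst_sub (hasSubst_of_constantCoeff_zero hF0), hA₁, hB₁]
      ring
    rw [iterComp, iterComp, perturbationSum_succ (constantCoeff_homC_one φ) hu0, Pi.add_apply,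
      comp_apply_eq_subst hF0, comp_apply_eq_subst hφ,
      comp_apply_eq_subst (constantCoeff_homC_one φ), comp_apply_eq_subst hu0, ← hA₁, hsplit]
    refine le_trans (le_min (le_min ?_ ?_) ?_)
      (min_order_le_add.trans' (min_le_min_right _ min_order_le_add))
    · exact (ih i).trans (order_le_order_subst hF0 _)
    · simpa [add_comm] using le_order_subst_add_sub hφ hu_order (constantCoeff_iterComp hφ m i)
    · refine le_trans ?_ (le_order_subst_sub_subst hF0 (constantCoeff_homC_one φ) hFL S)
      simpa [add_assoc, one_add_one_eq_two] using add_le_add hS (le_refl (1 : ℕ∞))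

end Perturbation

theorem perturbation_component_formula_general
    (n : ℕ) (K : Type) [Field K] (k : ℕ) (hk : 1 ≤ k)
    (φ : Sys n K) (hφ0 : homC 0 φ = 0)
    (u : Sys n K) (hu : homC (k + 1) u = u) :
    ∀ m : ℕ, 1 ≤ m →
      homC (k + 1) (iterComp (φ + u) m) =
        homC (k + 1) (iterComp φ m) +
          ∑ i ∈ Finset.range m,
            comp (iterComp (homC 1 φ) i) (comp u (iterComp (homC 1 φ) (m - 1 - i))) := by
  have hφ : ∀ j, (φ j).constantCoeff = 0 := fun j ↦ by
    simpa [homC_apply, coeff_homogeneousComponent] using congrArg (coeff 0) (congrFun hφ0 j)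
  have hu' : ∀ j, (u j).IsHomogeneous (k + 1) := fun j ↦ by
    rw [← hu]; exact isHomogeneous_homC (k + 1) u j
  intro m _
  funext i
  set A := iterComp (φ + u) m i
  set B := iterComp φ m i
  set S := perturbationSum (homC 1 φ) u m i
  have hS : S.IsHomogeneous (k + 1) :=
    isHomogeneous_perturbationSum (isHomogeneous_homC 1 φ) hu' k.succ_ne_zero m i
  have hrest : ((k + 1 : ℕ) : ℕ∞) < (A - B - S).order :=
    (ENat.natCast_lt_natCast.mpr (k + 1).lt_succ_self).trans_le
      (le_order_iterComp_add_sub_perturbationSum hk hφ hu' m i)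
  calc homC (k + 1) (iterComp (φ + u) m) i
      = homogeneousComponent (k + 1) (B + S + (A - B - S)) := by rw [homC_apply]; congr 1; ring
    _ = homogeneousComponent (k + 1) B + S := by
      rw [map_add, map_add, homogeneousComponent_of_lt_order_eq_zero hrest, add_zero,
        ← isHomogeneous_iff_eq_homogeneousComponent.mp hS]
    _ = _ := by rw [Pi.add_apply, homC_apply]; rfl

/-- If `φ₀ = 0` with invertible linear part, `u` is homogeneous of degree
`k+1` (with `k ≥ 1`), then for every `m ≥ 1`:
`((φ+u)^m)_{k+1} = (φ^m)_{k+1} + Σ_{i=0}^{m-1} φ₁^i ∘ u ∘ φ₁^{m-1-i}`. -/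
theorem perturbation_component_formula
    (n : ℕ) (K : Type) [Field K] (k : ℕ) (hk : 1 ≤ k)
    (φ : Sys n K) (hφ0 : homC 0 φ = 0) (hinv : IsUnit (jac φ).det)
    (u : Sys n K) (hu : homC (k + 1) u = u) :
    ∀ m : ℕ, 1 ≤ m →
      homC (k + 1) (iterComp (φ + u) m) =
        homC (k + 1) (iterComp φ m) +
          ∑ i ∈ Finset.range m,
            comp (iterComp (homC 1 φ) i) (comp u (iterComp (homC 1 φ) (m - 1 - i))) :=
  perturbation_component_formula_general n K k hk φ hφ0 u hu
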